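/- If f is holomorphic with f' ≠ 0 and q = S(f), then B_q[(F∘f)/f', (G∘f)/f'] = B_0[F,G]∘f, where B_q[F,G] = F''G + FG'' − F'G' + 2qFG and B_0 is the case q = 0. -/

import Mathlib

/-- The bilinear form `B_q[F,G] = F''G + FG'' − F'G' + 2qFG`. -/
noncomputable def Bform (q F G : ℂ → ℂ) (z : ℂ) : ℂ :=
  deriv (deriv F) z * G z + F z * deriv (deriv G) z
    - deriv F z * deriv G z + 2 * q z * F z * G z

/-- The Schwarzian derivative `S(f) = f'''/f' - (3/2)(f''/f')²`. -/
noncomputable def schwarzian (f : ℂ → ℂ) (z : ℂ) : ℂ :=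
  deriv (deriv (deriv f)) z / deriv f z - (3/2) * (deriv (deriv f) z / deriv f z) ^ 2

/-!
Put `g = 1/f'`, so that `(F∘f)/f' = (F∘f)·g`. Multiplying both arguments of `B_q` by `g` gives
`g²·B_q + g g'·(φψ)' + (2 g g'' − g'²)·φψ`, and composing both with `f` gives
`f'²·(B₀∘f) + f''·((FG)'∘f) + 2q·(FG∘f)`. The first-order terms add up to `g·(g f')'·((FG)'∘f) = 0`, and
for `g = 1/f'` one has `2 g g'' − g'² = −2 S(f) g²`, which cancels the potential term exactly
when `q = S(f)`.
-/

section Derivatives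

variable {φ g F f : ℂ → ℂ}

theorem deriv_mul' (hφ : Differentiable ℂ φ) (hg : Differentiable ℂ g) :
    deriv (φ * g) = deriv φ * g + φ * deriv g :=
  funext fun z => deriv_mul (hφ z) (hg z)

theorem deriv_deriv_mul (hφ : Differentiable ℂ φ) (hg : Differentiable ℂ g) :
    deriv (deriv (φ * g))
      = deriv (deriv φ) * g + 2 * (deriv φ * deriv g) + φ * deriv (deriv g) := by
  ext z
  rw [deriv_mul' hφ hg, deriv_add ((hφ.deriv.mul hg) z) ((hφ.mul hg.deriv) z),
    deriv_mul' hφ.deriv hg, deriv_mul' hφ hg.deriv]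
  simp only [Pi.add_apply, Pi.mul_apply, Pi.ofNat_apply]
  ring

theorem deriv_comp' (hF : Differentiable ℂ F) (hf : Differentiable ℂ f) :
    deriv (F ∘ f) = (deriv F ∘ f) * deriv f :=
  funext fun z => deriv_comp z (hF (f z)) (hf z)

theorem deriv_deriv_comp (hF : Differentiable ℂ F) (hf : Differentiable ℂ f) :
    deriv (deriv (F ∘ f))
      = (deriv (deriv F) ∘ f) * deriv f ^ 2 + (deriv F ∘ f) * deriv (deriv f) := by
  rw [deriv_comp' hF hf, deriv_mul' (hF.deriv.comp hf) hf.deriv, deriv_comp' hF.deriv hf]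
  ext z
  simp only [Pi.add_apply, Pi.mul_apply, Pi.pow_apply, Function.comp_apply]
  ring

theorem deriv_inv_deriv (hf : Differentiable ℂ f) (hf' : ∀ z, deriv f z ≠ 0) :
    deriv (deriv f)⁻¹ = -deriv (deriv f) / deriv f ^ 2 :=
  funext fun z => by simpa using deriv_inv'' (hf.deriv z) (hf' z)

theorem deriv_deriv_inv_deriv (hf : Differentiable ℂ f)
    (hf' : ∀ z, deriv f z ≠ 0) (z : ℂ) :
    deriv (deriv (deriv f)⁻¹) z
      = (2 * deriv (deriv f) z ^ 2 - deriv f z * deriv (deriv (deriv f)) z) / deriv f z ^ 3 := by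
  have h := (hf.deriv.deriv z).hasDerivAt.neg.div ((hf.deriv z).hasDerivAt.pow 2)
    (pow_ne_zero 2 (hf' z))
  rw [deriv_inv_deriv hf hf', h.deriv]
  simp only [Pi.pow_apply, Pi.neg_apply]
  field_simp [hf' z]
  ring

theorem two_mul_inv_deriv_mul_deriv_deriv_sub_sq (hf : Differentiable ℂ f)
    (hf' : ∀ z, deriv f z ≠ 0) (z : ℂ) :
    2 * (deriv f)⁻¹ z * deriv (deriv (deriv f)⁻¹) z - deriv (deriv f)⁻¹ z ^ 2
      = -(2 * schwarzian f z * (deriv f)⁻¹ z ^ 2) := by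
  rw [deriv_deriv_inv_deriv hf hf' z, deriv_inv_deriv hf hf']
  simp only [schwarzian, Pi.inv_apply, Pi.div_apply, Pi.neg_apply, Pi.pow_apply]
  field_simp [hf' z]
  ring

end Derivatives

theorem Bform_mul_mul {q φ ψ g : ℂ → ℂ} (hφ : Differentiable ℂ φ)
    (hψ : Differentiable ℂ ψ) (hg : Differentiable ℂ g) (z : ℂ) :
    Bform q (φ * g) (ψ * g) z
      = g z ^ 2 * Bform q φ ψ z + g z * deriv g z * (deriv φ z * ψ z + φ z * deriv ψ z)
        + (2 * g z * deriv (deriv g) z - deriv g z ^ 2) * φ z * ψ z := by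
  rw [Bform, Bform, deriv_deriv_mul hφ hg, deriv_deriv_mul hψ hg, deriv_mul' hφ hg,
    deriv_mul' hψ hg]
  simp only [Pi.add_apply, Pi.mul_apply, Pi.ofNat_apply]
  ring

theorem Bform_comp {q F G f : ℂ → ℂ} (hF : Differentiable ℂ F)
    (hG : Differentiable ℂ G) (hf : Differentiable ℂ f) (z : ℂ) :
    Bform q (F ∘ f) (G ∘ f) z
      = deriv f z ^ 2 * Bform (fun _ => 0) F G (f z)
        + deriv (deriv f) z * (deriv F (f z) * G (f z) + F (f z) * deriv G (f z))
        + 2 * q z * F (f z) * G (f z) := by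
  rw [Bform, Bform, deriv_deriv_comp hF hf, deriv_deriv_comp hG hf, deriv_comp' hF hf,
    deriv_comp' hG hf]
  simp only [Pi.add_apply, Pi.mul_apply, Pi.pow_apply, Function.comp_apply]
  ring

/-- If `q = S(f)`, then `B_q[(F∘f)/f', (G∘f)/f'] = B₀[F,G] ∘ f`. -/
theorem Bform_schwarzian_invariance (f F G : ℂ → ℂ)
    (hf : Differentiable ℂ f) (hf' : ∀ z, deriv f z ≠ 0)
    (hF : Differentiable ℂ F) (hG : Differentiable ℂ G) :
    ∀ z, Bform (schwarzian f)
        (fun w => F (f w) / deriv f w) (fun w => G (f w) / deriv f w) z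
      = Bform (fun _ => 0) F G (f z) := by
  intro z
  have hdiv : ∀ H : ℂ → ℂ, (fun w => H (f w) / deriv f w) = (H ∘ f) * (deriv f)⁻¹ :=
    fun H => funext fun w => div_eq_mul_inv _ _
  rw [hdiv, hdiv, Bform_mul_mul (hF.comp hf) (hG.comp hf) (hf.deriv.inv hf'),
    two_mul_inv_deriv_mul_deriv_deriv_sub_sq hf hf', Bform_comp hF hG hf, deriv_comp' hF hf,
    deriv_comp' hG hf, deriv_inv_deriv hf hf']
  simp only [Pi.inv_apply, Pi.mul_apply, Pi.div_apply, Pi.neg_apply, Pi.pow_apply,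
    Function.comp_apply]
  field_simp [hf' z]
  ring
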